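/- arXiv:0705.0669 — 5 statements merged into one kernel-verified Lean document; each statement's English description precedes it below -/
import Mathlib

section
/- With notation as in the Gaussian elimination setup over F₂ (h the map sending y to x, F = P∘(1 + ∂∘h), G = (1 + h∘∂)∘I, ∂' = P∘(∂ + ∂∘h∘∂)∘I), we have F ∘ G = id on C'. -/
/-- The chain complex `C` has a basis `T ⊕ U ⊕ U`: `Sum.inl t` are the generators
not containing the bigon corners `x` and `y`, `Sum.inr (Sum.inl u)` are the
generators containing `x`, and `Sum.inr (Sum.inr u)` are the corresponding
generators containing `y` (obtained by replacing `x` with `y`).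
`hmap` is the map `h` sending a generator containing `y` to the corresponding
generator containing `x`, and all other generators to `0`. -/
noncomputable def hmap (T U : Type) :
    ((T ⊕ U ⊕ U) →₀ ZMod 2) →ₗ[ZMod 2] ((T ⊕ U ⊕ U) →₀ ZMod 2) :=
  Finsupp.lift _ (ZMod 2) _ (fun s => match s with
    | Sum.inr (Sum.inr u) => Finsupp.single (Sum.inr (Sum.inl u)) 1
    | _ => 0)

/-- The inclusion `I : C' → C` of the span `C'` of the generators containing
neither `x` nor `y`. -/
noncomputable def Imap (T U : Type) :
    (T →₀ ZMod 2) →ₗ[ZMod 2] ((T ⊕ U ⊕ U) →₀ ZMod 2) :=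
  Finsupp.lmapDomain (ZMod 2) (ZMod 2) Sum.inl

/-- The projection `P : C → C'`. -/
noncomputable def Pmap (T U : Type) :
    ((T ⊕ U ⊕ U) →₀ ZMod 2) →ₗ[ZMod 2] (T →₀ ZMod 2) :=
  Finsupp.lift _ (ZMod 2) _ (fun s => match s with
    | Sum.inl t => Finsupp.single t 1
    | _ => 0)

/-! Expanding `P (1 + ∂h)(1 + h∂) I = P I + P ∂ h I + P h ∂ I + P ∂ h h ∂ I`, every term but `P I = 1`
contains one of `h I`, `P h` or `h h`, all of which vanish. -/

theorem LinearMap.comp_id_add_comp_comp_id_add_comp_eq_id {R M N : Type*} [Semiring R]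
    [AddCommMonoid M] [Module R M] [AddCommMonoid N] [Module R N]
    (P : M →ₗ[R] N) (I : N →ₗ[R] M) (h d : M →ₗ[R] M)
    (hPI : P ∘ₗ I = LinearMap.id) (hhI : h ∘ₗ I = 0) (hPh : P ∘ₗ h = 0) (hhh : h ∘ₗ h = 0) :
    (P ∘ₗ (LinearMap.id + d ∘ₗ h)) ∘ₗ ((LinearMap.id + h ∘ₗ d) ∘ₗ I) = LinearMap.id := by
  ext x
  have hI : h (I x) = 0 := LinearMap.congr_fun hhI x
  have hP : ∀ y, P (h y) = 0 := LinearMap.congr_fun hPh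
  have hh : ∀ y, h (h y) = 0 := LinearMap.congr_fun hhh
  have hPI' : P (I x) = x := LinearMap.congr_fun hPI x
  simp [hI, hP, hh, hPI']

theorem hmap_comp_Imap (T U : Type) : hmap T U ∘ₗ Imap T U = 0 := by
  ext t
  simp [hmap, Imap]

theorem Pmap_comp_hmap (T U : Type) : Pmap T U ∘ₗ hmap T U = 0 := by
  ext (t | u | u) <;> simp [Pmap, hmap]

theorem hmap_comp_hmap (T U : Type) : hmap T U ∘ₗ hmap T U = 0 := by
  ext (t | u | u) <;> simp [hmap]

theorem Pmap_comp_Imap (T U : Type) : Pmap T U ∘ₗ Imap T U = LinearMap.id := by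
  ext t
  simp [Pmap, Imap]

theorem F_comp_G_general (T U : Type)
    (d : ((T ⊕ U ⊕ U) →₀ ZMod 2) →ₗ[ZMod 2] ((T ⊕ U ⊕ U) →₀ ZMod 2)) :
    (Pmap T U ∘ₗ (LinearMap.id + d ∘ₗ hmap T U)) ∘ₗ
        ((LinearMap.id + hmap T U ∘ₗ d) ∘ₗ Imap T U)
      = LinearMap.id :=
  LinearMap.comp_id_add_comp_comp_id_add_comp_eq_id _ _ _ d (Pmap_comp_Imap T U) (hmap_comp_Imap T U)
    (Pmap_comp_hmap T U) (hmap_comp_hmap T U)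

/-- With `F = P∘(1 + ∂∘h)` and `G = (1 + h∘∂)∘I`, we have `F ∘ G = id` on `C'`. -/
theorem F_comp_G (T U : Type)
    (d : ((T ⊕ U ⊕ U) →₀ ZMod 2) →ₗ[ZMod 2] ((T ⊕ U ⊕ U) →₀ ZMod 2))
    (hd : d ∘ₗ d = 0)
    (hiso : ∀ u : U, hmap T U (d (Finsupp.single (Sum.inr (Sum.inl u)) 1))
      = Finsupp.single (Sum.inr (Sum.inl u)) 1) :
    (Pmap T U ∘ₗ (LinearMap.id + d ∘ₗ hmap T U)) ∘ₗ
        ((LinearMap.id + hmap T U ∘ₗ d) ∘ₗ Imap T U)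
      = LinearMap.id :=
  F_comp_G_general T U d
end

section
/- With notation as in the Gaussian elimination setup over F₂, G ∘ F is chain homotopic to the identity on C via the homotopy h: that is, G ∘ F + id = ∂ ∘ h + h ∘ ∂. -/
noncomputable def pxmap (T U : Type) :
    ((T ⊕ U ⊕ U) →₀ ZMod 2) →ₗ[ZMod 2] ((T ⊕ U ⊕ U) →₀ ZMod 2) :=
  Finsupp.lift _ (ZMod 2) _ (fun s => match s with
    | Sum.inr (Sum.inl u) => Finsupp.single (Sum.inr (Sum.inl u)) 1
    | _ => 0)

noncomputable def pymap (T U : Type) :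
    ((T ⊕ U ⊕ U) →₀ ZMod 2) →ₗ[ZMod 2] ((T ⊕ U ⊕ U) →₀ ZMod 2) :=
  Finsupp.lift _ (ZMod 2) _ (fun s => match s with
    | Sum.inr (Sum.inr u) => Finsupp.single (Sum.inr (Sum.inr u)) 1
    | _ => 0)

noncomputable def smap (T U : Type) :
    ((T ⊕ U ⊕ U) →₀ ZMod 2) →ₗ[ZMod 2] ((T ⊕ U ⊕ U) →₀ ZMod 2) :=
  Finsupp.lift _ (ZMod 2) _ (fun s => match s with
    | Sum.inr (Sum.inl u) => Finsupp.single (Sum.inr (Sum.inr u)) 1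
    | _ => 0)

-- px ∘ h = h
lemma pxh (T U : Type) : pxmap T U ∘ₗ hmap T U = hmap T U := by
  apply Finsupp.lhom_ext; intro a b
  rcases a with t | u | u <;>
    simp [pxmap, hmap, Finsupp.lift_apply, Finsupp.sum_single_index]

-- s ∘ h = py
lemma sh (T U : Type) : smap T U ∘ₗ hmap T U = pymap T U := by
  apply Finsupp.lhom_ext; intro a b
  rcases a with t | u | u <;>
    simp [smap, hmap, pymap, Finsupp.lift_apply, Finsupp.sum_single_index]

-- I ∘ P = id + px + py  (char 2)
lemma decomp (T U : Type) :
    Imap T U ∘ₗ Pmap T U = LinearMap.id + pxmap T U + pymap T U := by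
  apply Finsupp.lhom_ext; intro a b
  rcases a with t | u | u <;>
    simp [Imap, Pmap, pxmap, pymap, Finsupp.lift_apply,
      Finsupp.sum_single_index, Finsupp.smul_single, ← Finsupp.single_add,
      CharTwo.add_self_eq_zero]

-- h ∘ d ∘ px = px, from hiso
lemma hdpx (T U : Type)
    (d : ((T ⊕ U ⊕ U) →₀ ZMod 2) →ₗ[ZMod 2] ((T ⊕ U ⊕ U) →₀ ZMod 2))
    (hiso : ∀ u : U, hmap T U (d (Finsupp.single (Sum.inr (Sum.inl u)) 1))
      = Finsupp.single (Sum.inr (Sum.inl u)) 1) :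
    hmap T U ∘ₗ (d ∘ₗ pxmap T U) = pxmap T U := by
  apply Finsupp.lhom_ext; intro a b
  rcases a with t | u | u <;>
    simp only [pxmap, LinearMap.comp_apply, Finsupp.lift_apply,
      Finsupp.sum_single_index, zero_smul, map_zero, smul_zero,
      Finsupp.smul_single, smul_eq_mul, mul_one]
  rw [show (Finsupp.single (Sum.inr (Sum.inl u) : T ⊕ U ⊕ U) b)
      = b • Finsupp.single (Sum.inr (Sum.inl u) : T ⊕ U ⊕ U) 1 by
      simp [Finsupp.smul_single]]
  rw [map_smul, map_smul, hiso]

/-- `G ∘ F` is chain homotopic to the identity on `C` via the homotopy `h`: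
`G∘F + id = ∂∘h + h∘∂`. -/
theorem G_comp_F_homotopic_id (T U : Type)
    (d : ((T ⊕ U ⊕ U) →₀ ZMod 2) →ₗ[ZMod 2] ((T ⊕ U ⊕ U) →₀ ZMod 2))
    (hd : d ∘ₗ d = 0)
    (hiso : ∀ u : U, hmap T U (d (Finsupp.single (Sum.inr (Sum.inl u)) 1))
      = Finsupp.single (Sum.inr (Sum.inl u)) 1) :
    ((LinearMap.id + hmap T U ∘ₗ d) ∘ₗ Imap T U) ∘ₗ
        (Pmap T U ∘ₗ (LinearMap.id + d ∘ₗ hmap T U)) + LinearMap.id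
      = d ∘ₗ hmap T U + hmap T U ∘ₗ d := by
  have two0 : ∀ f : ((T ⊕ U ⊕ U) →₀ ZMod 2) →ₗ[ZMod 2] ((T ⊕ U ⊕ U) →₀ ZMod 2),
      f + f = 0 := fun f => by
    rw [← two_smul (ZMod 2) f, show (2 : ZMod 2) = 0 by decide, zero_smul]
  rw [LinearMap.comp_assoc, ← LinearMap.comp_assoc (LinearMap.id + d ∘ₗ hmap T U)
    (Pmap T U) (Imap T U), decomp]
  set h := hmap T U
  set px := pxmap T U
  set py := pymap T U
  set s := smap T U
  simp only [← Module.End.mul_eq_comp, ← Module.End.one_eq_id]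
  have f1 : h * (d * px) = px := by
    rw [Module.End.mul_eq_comp, Module.End.mul_eq_comp]; exact hdpx T U d hiso
  have f2 : px * h = h := by rw [Module.End.mul_eq_comp]; exact pxh T U
  have f3 : s * h = py := by rw [Module.End.mul_eq_comp]; exact sh T U
  have hdh : h * (d * h) = h := by
    have key : h * (d * (px * h)) = px * h := by
      rw [show h * (d * (px * h)) = (h * (d * px)) * h by noncomm_ring, f1]
    rw [f2] at key; exact key
  have e1 : (1 + h * d) * px = 0 := by
    have : (1 + h * d) * px = px + h * (d * px) := by noncomm_ring
    rw [this, f1, two0]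
  have e2 : py * (1 + d * h) = 0 := by
    have : py * (1 + d * h) = s * h + s * (h * (d * h)) := by rw [← f3]; noncomm_ring
    rw [this, hdh, f3, two0]
  have e3 : h * (d * (d * h)) = 0 := by
    have : h * (d * (d * h)) = h * ((d * d) * h) := by noncomm_ring
    rw [this, Module.End.mul_eq_comp d d, hd]
    noncomm_ring
  calc (1 + h * d) * ((1 + px + py) * (1 + d * h)) + 1
      = (1 + h * d) * (1 + d * h) + ((1 + h * d) * px) * (1 + d * h)
        + (1 + h * d) * (py * (1 + d * h)) + 1 := by noncomm_ring
    _ = (1 + h * d) * (1 + d * h) + 1 := by rw [e1, e2]; noncomm_ring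
    _ = d * h + h * d + h * (d * (d * h)) + (1 + 1) := by noncomm_ring
    _ = d * h + h * d := by rw [e3, two0 1]; abel
end

section
/- With notation as in the Gaussian elimination setup over F₂, the maps F = P∘(1 + ∂∘h) : C → C' and G = (1 + h∘∂)∘I : C' → C are chain maps: ∂' ∘ F = F ∘ ∂ and ∂ ∘ G = G ∘ ∂', where ∂' = P ∘ (∂ + ∂∘h∘∂) ∘ I. -/
/-! With signs, over any ring, take `F = P(1 - ∂h)`, `G = (1 - h∂)I` and `∂' = P(∂ - ∂h∂)I`.
Using only `∂² = 0`, both chain-map identities reduce to `(1 - h∂)(1 - IP)(1 - ∂h) = 0`.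
Here `1 - IP` is the projection onto the span of the `x`- and `y`-generators, which equals
`hS + Sh` for the map `S` sending each `x`-generator to its `y`-generator, and
`(1 - h∂)h = 0 = h(1 - ∂h)` because `h∂h = h`. Over `F₂` the signs disappear. -/
lemma sandwich_eq_zero {A : Type*} [Ring A] {h d s : A} (hdh : h * d * h = h) :
    (1 - h * d) * (h * s + s * h) * (1 - d * h) = 0 := by
  have left : (1 - h * d) * h = 0 := by rw [sub_mul, one_mul, hdh, sub_self]
  have right : h * (1 - d * h) = 0 := by rw [mul_sub, mul_one, ← mul_assoc, hdh, sub_self]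
  calc (1 - h * d) * (h * s + s * h) * (1 - d * h)
      = (1 - h * d) * h * s * (1 - d * h) + (1 - h * d) * s * (h * (1 - d * h)) := by
        noncomm_ring
    _ = 0 := by rw [left, right, zero_mul, zero_mul, mul_zero, add_zero]

section ChainMaps

variable {R M N : Type*} [Semiring R] [AddCommGroup M] [Module R M] [AddCommGroup N] [Module R N]
  {d h : M →ₗ[R] M} {I : N →ₗ[R] M} {P : M →ₗ[R] N}

theorem projection_isChainMap (hd : d ∘ₗ d = 0)
    (hkey : (LinearMap.id - h ∘ₗ d) ∘ₗ (LinearMap.id - I ∘ₗ P) ∘ₗ (LinearMap.id - d ∘ₗ h) = 0) :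
    (P ∘ₗ (d - d ∘ₗ h ∘ₗ d) ∘ₗ I) ∘ₗ (P ∘ₗ (LinearMap.id - d ∘ₗ h))
      = (P ∘ₗ (LinearMap.id - d ∘ₗ h)) ∘ₗ d := by
  ext v
  have hdd (x : M) : d (d x) = 0 := LinearMap.congr_fun hd x
  -- the defect `∂'F - F∂` is `-P∂(1 - h∂)(1 - IP)(1 - ∂h)`
  have hdefect := congr(P (d ($(LinearMap.congr_fun hkey v))))
  simp only [LinearMap.comp_apply, LinearMap.sub_apply, LinearMap.id_apply, map_sub,
    LinearMap.zero_apply, map_zero, hdd] at hdefect ⊢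
  rw [← sub_eq_zero, ← neg_eq_zero, ← hdefect]
  abel

theorem inclusion_isChainMap (hd : d ∘ₗ d = 0)
    (hkey : (LinearMap.id - h ∘ₗ d) ∘ₗ (LinearMap.id - I ∘ₗ P) ∘ₗ (LinearMap.id - d ∘ₗ h) = 0) :
    d ∘ₗ ((LinearMap.id - h ∘ₗ d) ∘ₗ I)
      = ((LinearMap.id - h ∘ₗ d) ∘ₗ I) ∘ₗ (P ∘ₗ (d - d ∘ₗ h ∘ₗ d) ∘ₗ I) := by
  ext v
  have hdd (x : M) : d (d x) = 0 := LinearMap.congr_fun hd x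
  -- the defect `∂G - G∂'` is `(1 - h∂)(1 - IP)(1 - ∂h)∂I`
  have hdefect := LinearMap.congr_fun hkey (d (I v))
  simp only [LinearMap.comp_apply, LinearMap.sub_apply, LinearMap.id_apply, map_sub,
    LinearMap.zero_apply, map_zero, hdd] at hdefect ⊢
  rw [← sub_eq_zero, ← hdefect]
  abel

end ChainMaps

noncomputable def xToY (T U : Type) :
    ((T ⊕ U ⊕ U) →₀ ZMod 2) →ₗ[ZMod 2] ((T ⊕ U ⊕ U) →₀ ZMod 2) :=
  Finsupp.lift _ (ZMod 2) _ (fun s => match s with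
    | Sum.inr (Sum.inl u) => Finsupp.single (Sum.inr (Sum.inr u)) 1
    | _ => 0)

lemma id_sub_Imap_comp_Pmap (T U : Type) :
    LinearMap.id - Imap T U ∘ₗ Pmap T U = hmap T U ∘ₗ xToY T U + xToY T U ∘ₗ hmap T U := by
  ext (t | u | u) <;>
    simp [Imap, Pmap, hmap, xToY, Finsupp.lift_apply, Finsupp.mapDomain_single]

lemma hmap_comp_comp_hmap (T U : Type)
    {d : ((T ⊕ U ⊕ U) →₀ ZMod 2) →ₗ[ZMod 2] ((T ⊕ U ⊕ U) →₀ ZMod 2)}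
    (hiso : ∀ u : U, hmap T U (d (Finsupp.single (Sum.inr (Sum.inl u)) 1))
      = Finsupp.single (Sum.inr (Sum.inl u)) 1) :
    hmap T U * d * hmap T U = hmap T U := by
  have hy (u : U) : hmap T U (Finsupp.single (Sum.inr (Sum.inr u)) 1)
      = Finsupp.single (Sum.inr (Sum.inl u)) 1 := by
    simp [hmap, Finsupp.lift_apply]
  ext (t | u | u)
  · simp [Module.End.mul_apply, hmap, Finsupp.lift_apply]
  · simp [Module.End.mul_apply, hmap, Finsupp.lift_apply]
  · simp [Module.End.mul_apply, hy, hiso]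

theorem F_G_chain_maps_general (T U : Type)
    (d : ((T ⊕ U ⊕ U) →₀ ZMod 2) →ₗ[ZMod 2] ((T ⊕ U ⊕ U) →₀ ZMod 2))
    (hd : d ∘ₗ d = 0)
    (hiso : ∀ u : U, hmap T U (d (Finsupp.single (Sum.inr (Sum.inl u)) 1))
      = Finsupp.single (Sum.inr (Sum.inl u)) 1) :
    let h := hmap T U
    let I := Imap T U
    let P := Pmap T U
    let F := P ∘ₗ (LinearMap.id + d ∘ₗ h)
    let G := (LinearMap.id + h ∘ₗ d) ∘ₗ I
    let d' := P ∘ₗ (d + d ∘ₗ h ∘ₗ d) ∘ₗ I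
    d' ∘ₗ F = F ∘ₗ d ∧ d ∘ₗ G = G ∘ₗ d' := by
  intro h I P F G d'
  have hkey : (LinearMap.id - h ∘ₗ d) ∘ₗ (LinearMap.id - I ∘ₗ P) ∘ₗ (LinearMap.id - d ∘ₗ h) = 0 := by
    have hsandwich := sandwich_eq_zero (s := xToY T U) (hmap_comp_comp_hmap T U hiso)
    rw [id_sub_Imap_comp_Pmap]
    simp only [Module.End.mul_eq_comp, Module.End.one_eq_id, LinearMap.comp_assoc] at hsandwich
    exact hsandwich
  have hF : F = P ∘ₗ (LinearMap.id - d ∘ₗ h) := by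
    rw [ZModModule.sub_eq_add LinearMap.id (d ∘ₗ h)]
  have hG : G = (LinearMap.id - h ∘ₗ d) ∘ₗ I := by
    rw [ZModModule.sub_eq_add LinearMap.id (h ∘ₗ d)]
  have hd' : d' = P ∘ₗ (d - d ∘ₗ h ∘ₗ d) ∘ₗ I := by
    rw [ZModModule.sub_eq_add d (d ∘ₗ h ∘ₗ d)]
  rw [hF, hG, hd']
  exact ⟨projection_isChainMap hd hkey, inclusion_isChainMap hd hkey⟩

/-- `F = P∘(1 + ∂∘h)` and `G = (1 + h∘∂)∘I` are chain maps:
`∂' ∘ F = F ∘ ∂` and `∂ ∘ G = G ∘ ∂'`, where `∂' = P ∘ (∂ + ∂∘h∘∂) ∘ I`. -/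
theorem F_G_chain_maps (T U : Type)
    (d : ((T ⊕ U ⊕ U) →₀ ZMod 2) →ₗ[ZMod 2] ((T ⊕ U ⊕ U) →₀ ZMod 2))
    (hd : d ∘ₗ d = 0)
    (hiso : ∀ u : U, hmap T U (d (Finsupp.single (Sum.inr (Sum.inl u)) 1))
      = Finsupp.single (Sum.inr (Sum.inl u)) 1)
    (hdhd : d ∘ₗ hmap T U ∘ₗ d ∘ₗ hmap T U ∘ₗ d = d ∘ₗ hmap T U ∘ₗ d) :
    let h := hmap T U
    let I := Imap T U
    let P := Pmap T U
    let F := P ∘ₗ (LinearMap.id + d ∘ₗ h)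
    let G := (LinearMap.id + h ∘ₗ d) ∘ₗ I
    let d' := P ∘ₗ (d + d ∘ₗ h ∘ₗ d) ∘ₗ I
    d' ∘ₗ F = F ∘ₗ d ∧ d ∘ₗ G = G ∘ₗ d' :=
  F_G_chain_maps_general T U d hd hiso
end

section
/- If two grid states x and y of an n×n grid agree except in two rows and two columns (i.e., x and y share exactly n−2 points), and y is obtained from x by exchanging the two points to the opposite corners of a rectangle r, then M(x) − M(y) = 1 − 2·#(r ∩ 𝕆) + 2·#(points of x in the interior of r), where #(r ∩ 𝕆) is the number of O-markings inside r. -/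
/-- `I(A,B)` counts pairs `((a₁,a₂),(b₁,b₂)) ∈ A × B` with `a₁ < b₁` and `a₂ < b₂`. -/
def Inum (A B : Finset (ℤ × ℤ)) : ℕ :=
  ((A ×ˢ B).filter (fun p => p.1.1 < p.2.1 ∧ p.1.2 < p.2.2)).card

/-- `J(A,B) = (I(A,B) + I(B,A))/2`. -/
def Jnum (A B : Finset (ℤ × ℤ)) : ℚ :=
  ((Inum A B : ℚ) + (Inum B A : ℚ)) / 2

/-- The Maslov grading `M(x) = J(x,x) − 2J(x,𝕆) + J(𝕆,𝕆)`. -/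
def Mgr (x O : Finset (ℤ × ℤ)) : ℚ :=
  Jnum x x - 2 * Jnum x O + Jnum O O

noncomputable def gfun (a b : ℤ × ℤ) : ℚ := if a.1 < b.1 ∧ a.2 < b.2 then 1 else 0

lemma Inum_cast (A B : Finset (ℤ × ℤ)) :
    (Inum A B : ℚ) = ∑ a ∈ A, ∑ b ∈ B, gfun a b := by
  unfold Inum gfun
  rw [Finset.card_filter, ← Finset.sum_product']
  push_cast
  ring

lemma Dval (a₁ a₂ b₁ b₂ : ℤ) (ha : a₁ < a₂) (hb : b₁ < b₂) (z : ℤ × ℤ)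
    (h1 : z.1 ≠ a₁) (h2 : z.1 ≠ a₂) (h3 : z.2 ≠ b₁) (h4 : z.2 ≠ b₂) :
    gfun z (a₁,b₁) + gfun z (a₂,b₂) + gfun (a₁,b₁) z + gfun (a₂,b₂) z
      - (gfun z (a₁,b₂) + gfun z (a₂,b₁) + gfun (a₁,b₂) z + gfun (a₂,b₁) z)
    = if a₁ < z.1 ∧ z.1 < a₂ ∧ b₁ < z.2 ∧ z.2 < b₂ then 2 else 0 := by
  simp only [gfun]
  split_ifs <;> first | (exfalso; omega) | norm_num

lemma sum_ite_two (s : Finset (ℤ × ℤ)) (P : ℤ × ℤ → Prop) [DecidablePred P] :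
    ∑ z ∈ s, (if P z then (2:ℚ) else 0) = 2 * (s.filter P).card := by
  rw [← Finset.sum_filter, Finset.sum_const, nsmul_eq_mul, mul_comm]

/-- If grid states `x = s ∪ {(a₁,b₁),(a₂,b₂)}` and `y = s ∪ {(a₁,b₂),(a₂,b₁)}`
agree except at the four corners of a planar rectangle `r = [a₁,a₂]×[b₁,b₂]`
(so `x` and `y` share the `n−2` points of `s`, and `y` is obtained from `x` by
exchanging two points to the opposite corners of `r`), then
`M(x) − M(y) = 1 − 2·#(r ∩ 𝕆) + 2·#(x ∩ Int r)`. -/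
theorem rectangle_maslov_drop (s O : Finset (ℤ × ℤ)) (a₁ a₂ b₁ b₂ : ℤ)
    (ha : a₁ < a₂) (hb : b₁ < b₂)
    (hs : ∀ p ∈ s, p.1 ≠ a₁ ∧ p.1 ≠ a₂ ∧ p.2 ≠ b₁ ∧ p.2 ≠ b₂)
    (hO : ∀ o ∈ O, o.1 ≠ a₁ ∧ o.1 ≠ a₂ ∧ o.2 ≠ b₁ ∧ o.2 ≠ b₂) :
    Mgr (s ∪ {(a₁, b₁), (a₂, b₂)}) O - Mgr (s ∪ {(a₁, b₂), (a₂, b₁)}) O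
      = 1 - 2 * ((O.filter (fun o => a₁ < o.1 ∧ o.1 < a₂ ∧ b₁ < o.2 ∧ o.2 < b₂)).card : ℚ)
        + 2 * ((s.filter (fun p => a₁ < p.1 ∧ p.1 < a₂ ∧ b₁ < p.2 ∧ p.2 < b₂)).card : ℚ) := by
  have hp : ((a₁,b₁) : ℤ × ℤ) ∉ s := fun h => (hs _ h).1 rfl
  have hq : ((a₂,b₂) : ℤ × ℤ) ∉ s := fun h => (hs _ h).2.1 rfl
  have hp' : ((a₁,b₂) : ℤ × ℤ) ∉ s := fun h => (hs _ h).1 rfl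
  have hq' : ((a₂,b₁) : ℤ × ℤ) ∉ s := fun h => (hs _ h).2.1 rfl
  have hpq : ((a₁,b₁) : ℤ × ℤ) ≠ (a₂,b₂) := by simp; omega
  have hpq' : ((a₁,b₂) : ℤ × ℤ) ≠ (a₂,b₁) := by simp; omega
  have h1 : ∀ f : ℤ × ℤ → ℚ,
      ∑ a ∈ s ∪ {(a₁,b₁),(a₂,b₂)}, f a = ∑ a ∈ s, f a + (f (a₁,b₁) + f (a₂,b₂)) := by
    intro f
    rw [Finset.sum_union (by simp [Finset.disjoint_insert_right, hp, hq]),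
      Finset.sum_pair hpq]
  have h2 : ∀ f : ℤ × ℤ → ℚ,
      ∑ a ∈ s ∪ {(a₁,b₂),(a₂,b₁)}, f a = ∑ a ∈ s, f a + (f (a₁,b₂) + f (a₂,b₁)) := by
    intro f
    rw [Finset.sum_union (by simp [Finset.disjoint_insert_right, hp', hq']),
      Finset.sum_pair hpq']
  have hDs : ∑ z ∈ s, (gfun z (a₁,b₁) + gfun z (a₂,b₂) + gfun (a₁,b₁) z + gfun (a₂,b₂) z
      - (gfun z (a₁,b₂) + gfun z (a₂,b₁) + gfun (a₁,b₂) z + gfun (a₂,b₁) z))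
      = 2 * ((s.filter (fun p => a₁ < p.1 ∧ p.1 < a₂ ∧ b₁ < p.2 ∧ p.2 < b₂)).card : ℚ) := by
    rw [Finset.sum_congr rfl (fun z hz =>
      Dval a₁ a₂ b₁ b₂ ha hb z (hs z hz).1 (hs z hz).2.1 (hs z hz).2.2.1 (hs z hz).2.2.2)]
    exact sum_ite_two s _
  have hDO : ∑ z ∈ O, (gfun z (a₁,b₁) + gfun z (a₂,b₂) + gfun (a₁,b₁) z + gfun (a₂,b₂) z
      - (gfun z (a₁,b₂) + gfun z (a₂,b₁) + gfun (a₁,b₂) z + gfun (a₂,b₁) z))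
      = 2 * ((O.filter (fun o => a₁ < o.1 ∧ o.1 < a₂ ∧ b₁ < o.2 ∧ o.2 < b₂)).card : ℚ) := by
    rw [Finset.sum_congr rfl (fun z hz =>
      Dval a₁ a₂ b₁ b₂ ha hb z (hO z hz).1 (hO z hz).2.1 (hO z hz).2.2.1 (hO z hz).2.2.2)]
    exact sum_ite_two O _
  have c1 : gfun (a₁,b₁) (a₂,b₂) = 1 := by simp [gfun, ha, hb]
  have c2 : gfun (a₂,b₂) (a₁,b₁) = 0 := by simp [gfun]; omega
  have c3 : gfun (a₁,b₂) (a₂,b₁) = 0 := by simp [gfun]; omega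
  have c4 : gfun (a₂,b₁) (a₁,b₂) = 0 := by simp [gfun]; omega
  have c5 : ∀ z : ℤ × ℤ, gfun z z = 0 := by intro z; simp [gfun]
  simp only [Mgr, Jnum, Inum_cast, h1, h2]
  simp only [Finset.sum_add_distrib, Finset.sum_sub_distrib] at hDs hDO ⊢
  rw [c1, c2, c3, c4, c5, c5, c5, c5] at *
  linarith [hDs, hDO]
end

section
/- The Maslov index is additive under composition of domains: if D₁ connects generator x to y and D₂ connects y to z, then for the composite domain D₁ ∘ D₂ (sum of the underlying 2-chains) connecting x to z, M(D₁ ∘ D₂) = M(D₁) + M(D₂), where M(D) = e(D) + n_x(D) + n_y(D) is given by Lipshitz's formula. -/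
/-!
Write `δ = Δ₁Δ₂` for the alternating corner sum of multiplicities and `σ = Σ₁Σ₂` for the plain
corner sum, where `Δ_v f (p) = f p - f (p - v)` and `Σ_v f (p) = f p + f (p - v)`. Then
`Connects D x y` says `δD = 𝟙_x - 𝟙_y`, and `n_p(D) = σD(p) / 4`. Since `e` and `n_p` are
additive in `D`, the claim reduces to `n_x(D₂) - n_y(D₂) = n_y(D₁) - n_z(D₁)`, i.e. to the
symmetry `⟨δD₁, σD₂⟩ = ⟨δD₂, σD₁⟩` of the pairing `⟨f, g⟩ = Σ_p f(p) g(p)`. Summation by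
parts gives `⟨Δ_v f, Σ_v g⟩ = -⟨Δ_v g, Σ_v f⟩` in each direction `v`, and the two signs cancel.
-/

/-- Combinatorial model of domains: the plane is cut into unit squares, the
square `(i,j)` being `[i,i+1] × [j,j+1]`, and a domain is a finitely supported
integer multiplicity function on squares. `quadMult D p` is the local corner
multiplicity `n_p(D)`: the average of the multiplicities of `D` in the four
quadrants (squares) around the lattice point `p`. -/
def quadMult (D : (ℤ × ℤ) →₀ ℤ) (p : ℤ × ℤ) : ℚ :=
  ((D (p.1, p.2) + D (p.1 - 1, p.2) + D (p.1 - 1, p.2 - 1) + D (p.1, p.2 - 1) : ℤ) : ℚ) / 4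

/-- `D` connects the generator `x` to the generator `y` (finite sets of lattice
points): at every lattice point the alternating sum of the four quadrant
multiplicities is `1` at points of `x`, `−1` at points of `y`, and `0`
elsewhere. -/
def Connects (D : (ℤ × ℤ) →₀ ℤ) (x y : Finset (ℤ × ℤ)) : Prop :=
  ∀ p : ℤ × ℤ,
    D (p.1, p.2) - D (p.1 - 1, p.2) - D (p.1, p.2 - 1) + D (p.1 - 1, p.2 - 1)
      = (if p ∈ x then 1 else 0) - (if p ∈ y then 1 else 0)

/-- Lipshitz's Maslov index `M(D) = e(D) + n_x(D) + n_y(D)` of a domain `D`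
connecting `x` to `y`, where `e` is the (additive) Euler measure and
`n_x(D) = Σ_{p ∈ x} n_p(D)`. -/
noncomputable def maslovIndex (e : ((ℤ × ℤ) →₀ ℤ) →+ ℚ) (D : (ℤ × ℤ) →₀ ℤ)
    (x y : Finset (ℤ × ℤ)) : ℚ :=
  e D + ∑ p ∈ x, quadMult D p + ∑ p ∈ y, quadMult D p

open Function

section BackwardDifferences

variable {G R : Type*} [AddCommGroup G] [CommRing R]

def bwdDiff (v : G) (f : G → R) (p : G) : R := f p - f (p - v)

def bwdSum (v : G) (f : G → R) (p : G) : R := f p + f (p - v)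

lemma hasFiniteSupport_comp_sub {f : G → R} (hf : f.HasFiniteSupport) (v : G) :
    (fun p => f (p - v)).HasFiniteSupport :=
  hf.fun_comp_of_injective (sub_left_injective (b := v))

@[fun_prop]
lemma hasFiniteSupport_bwdDiff {f : G → R} (hf : f.HasFiniteSupport) (v : G) :
    (bwdDiff v f).HasFiniteSupport :=
  HasFiniteSupport.fun_sub hf (hasFiniteSupport_comp_sub hf v)

@[fun_prop]
lemma hasFiniteSupport_bwdSum {f : G → R} (hf : f.HasFiniteSupport) (v : G) :
    (bwdSum v f).HasFiniteSupport :=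
  HasFiniteSupport.fun_add hf (hasFiniteSupport_comp_sub hf v)

lemma finsum_bwdDiff_eq_zero {f : G → R} (hf : f.HasFiniteSupport) (v : G) :
    ∑ᶠ p, bwdDiff v f p = 0 := by
  unfold bwdDiff
  have shift : ∑ᶠ p, f (p - v) = ∑ᶠ p, f p := finsum_comp_equiv (Equiv.subRight v)
  rw [finsum_sub_distrib hf (hasFiniteSupport_comp_sub hf v), shift, sub_self]

lemma bwdDiff_comm (u v : G) (f : G → R) :
    bwdDiff u (bwdDiff v f) = bwdDiff v (bwdDiff u f) := by
  ext p; simp only [bwdDiff, sub_right_comm p u v]; ring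

lemma bwdSum_comm (u v : G) (f : G → R) : bwdSum u (bwdSum v f) = bwdSum v (bwdSum u f) := by
  ext p; simp only [bwdSum, sub_right_comm p u v]; ring

lemma bwdDiff_bwdSum_comm (u v : G) (f : G → R) :
    bwdDiff u (bwdSum v f) = bwdSum v (bwdDiff u f) := by
  ext p; simp only [bwdDiff, bwdSum, sub_right_comm p u v]; ring

-- Summation by parts: pointwise, `Δ_v f · Σ_v g + Δ_v g · Σ_v f = Δ_v (2 f g)`, which telescopes.
lemma finsum_bwdDiff_mul_bwdSum_eq_neg {f g : G → R} (hf : f.HasFiniteSupport)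
    (hg : g.HasFiniteSupport) (v : G) :
    ∑ᶠ p, bwdDiff v f p * bwdSum v g p = -∑ᶠ p, bwdDiff v g p * bwdSum v f p := by
  rw [eq_neg_iff_add_eq_zero, ← finsum_add_distrib (by fun_prop) (by fun_prop)]
  have hfg : (fun p => 2 * (f p * g p)).HasFiniteSupport := by fun_prop
  refine (finsum_congr fun p => ?_).trans (finsum_bwdDiff_eq_zero hfg v)
  simp only [bwdDiff, bwdSum]
  ring

lemma finsum_bwdDiff_bwdDiff_mul_bwdSum_bwdSum_comm {f g : G → R} (hf : f.HasFiniteSupport)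
    (hg : g.HasFiniteSupport) (u v : G) :
    ∑ᶠ p, bwdDiff u (bwdDiff v f) p * bwdSum u (bwdSum v g) p
      = ∑ᶠ p, bwdDiff u (bwdDiff v g) p * bwdSum u (bwdSum v f) p := by
  calc ∑ᶠ p, bwdDiff u (bwdDiff v f) p * bwdSum u (bwdSum v g) p
      = -∑ᶠ p, bwdSum v (bwdDiff u g) p * bwdDiff v (bwdSum u f) p := by
        rw [finsum_bwdDiff_mul_bwdSum_eq_neg (by fun_prop) (by fun_prop),
          bwdDiff_bwdSum_comm u v g, bwdDiff_bwdSum_comm v u f]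
    _ = -∑ᶠ p, bwdDiff v (bwdSum u f) p * bwdSum v (bwdDiff u g) p := by
        simp only [mul_comm]
    _ = ∑ᶠ p, bwdDiff u (bwdDiff v g) p * bwdSum u (bwdSum v f) p := by
        rw [finsum_bwdDiff_mul_bwdSum_eq_neg (by fun_prop) (by fun_prop), neg_neg, bwdDiff_comm,
          bwdSum_comm]

end BackwardDifferences

lemma finsum_ite_sub_ite_mul {α R : Type*} [DecidableEq α] [CommRing R] (x y : Finset α)
    (h : α → R) :
    ∑ᶠ p, ((if p ∈ x then 1 else 0) - (if p ∈ y then 1 else 0)) * h p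
      = ∑ p ∈ x, h p - ∑ p ∈ y, h p := by
  have hsupp : support (fun p => ((if p ∈ x then 1 else 0) - (if p ∈ y then 1 else 0)) * h p)
      ⊆ ↑(x ∪ y) := by
    intro p hp
    by_contra hxy
    simp_all
  rw [finsum_eq_sum_of_support_subset _ hsupp]
  simp only [sub_mul, ite_mul, one_mul, zero_mul, Finset.sum_sub_distrib, Finset.sum_ite_mem,
    Finset.union_inter_cancel_left, Finset.union_inter_cancel_right]

def cornerDiff (D : (ℤ × ℤ) →₀ ℤ) : ℤ × ℤ → ℚ :=
  bwdDiff (1, 0) (bwdDiff (0, 1) fun p => (D p : ℚ))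

def cornerSum (D : (ℤ × ℤ) →₀ ℤ) : ℤ × ℤ → ℚ :=
  bwdSum (1, 0) (bwdSum (0, 1) fun p => (D p : ℚ))

lemma quadMult_eq_cornerSum_div (D : (ℤ × ℤ) →₀ ℤ) (p : ℤ × ℤ) :
    quadMult D p = cornerSum D p / 4 := by
  obtain ⟨a, b⟩ := p
  simp only [quadMult, cornerSum, bwdSum, Prod.mk_sub_mk, sub_zero]
  push_cast
  ring

lemma quadMult_add (D E : (ℤ × ℤ) →₀ ℤ) (p : ℤ × ℤ) :
    quadMult (D + E) p = quadMult D p + quadMult E p := by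
  simp only [quadMult, Finsupp.add_apply]
  push_cast
  ring

lemma Connects.cornerDiff_eq {D : (ℤ × ℤ) →₀ ℤ} {x y : Finset (ℤ × ℤ)} (h : Connects D x y)
    (p : ℤ × ℤ) :
    cornerDiff D p = (if p ∈ x then 1 else 0) - (if p ∈ y then 1 else 0) := by
  obtain ⟨a, b⟩ := p
  have hp : ((D (a, b) - D (a - 1, b) - D (a, b - 1) + D (a - 1, b - 1) : ℤ) : ℚ)
      = (if (a, b) ∈ x then 1 else 0) - (if (a, b) ∈ y then 1 else 0) := by
    exact_mod_cast h (a, b)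
  simp only [cornerDiff, bwdDiff, Prod.mk_sub_mk, sub_zero]
  push_cast at hp
  linear_combination hp

lemma finsum_cornerDiff_mul_cornerSum_comm (D E : (ℤ × ℤ) →₀ ℤ) :
    ∑ᶠ p, cornerDiff D p * cornerSum E p = ∑ᶠ p, cornerDiff E p * cornerSum D p :=
  finsum_bwdDiff_bwdDiff_mul_bwdSum_bwdSum_comm (D.hasFiniteSupport.fun_comp Int.cast_zero)
    (E.hasFiniteSupport.fun_comp Int.cast_zero) _ _

lemma Connects.sum_quadMult_sub_sum_quadMult {D : (ℤ × ℤ) →₀ ℤ} {x y : Finset (ℤ × ℤ)}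
    (h : Connects D x y) (E : (ℤ × ℤ) →₀ ℤ) :
    ∑ p ∈ x, quadMult E p - ∑ p ∈ y, quadMult E p
      = (∑ᶠ p, cornerDiff D p * cornerSum E p) / 4 := by
  simp only [h.cornerDiff_eq, finsum_ite_sub_ite_mul, quadMult_eq_cornerSum_div,
    ← Finset.sum_div, sub_div]

/-- **Additivity of the Maslov index under composition of domains**: if `D₁`
connects `x` to `y` and `D₂` connects `y` to `z`, then for the composite domain
`D₁ ∘ D₂ = D₁ + D₂` (sum of the underlying 2-chains) connecting `x` to `z`,
`M(D₁ ∘ D₂) = M(D₁) + M(D₂)`. -/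
theorem maslov_index_additive (e : ((ℤ × ℤ) →₀ ℤ) →+ ℚ)
    (D₁ D₂ : (ℤ × ℤ) →₀ ℤ) (x y z : Finset (ℤ × ℤ))
    (h₁ : Connects D₁ x y) (h₂ : Connects D₂ y z) :
    maslovIndex e (D₁ + D₂) x z = maslovIndex e D₁ x y + maslovIndex e D₂ y z := by
  have key : ∑ p ∈ x, quadMult D₂ p - ∑ p ∈ y, quadMult D₂ p
      = ∑ p ∈ y, quadMult D₁ p - ∑ p ∈ z, quadMult D₁ p := by
    rw [h₁.sum_quadMult_sub_sum_quadMult, h₂.sum_quadMult_sub_sum_quadMult,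
      finsum_cornerDiff_mul_cornerSum_comm]
  simp only [maslovIndex, map_add, quadMult_add, Finset.sum_add_distrib]
  linear_combination key
end
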